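/- arXiv:2302.06606 — 2 statements merged into one kernel-verified Lean document; each statement's English description precedes it below -/
import Mathlib

section
/- (Deterministic form of Theorem 4.1, 'regret guarantee for VLPR'.) Let MG be an m-player finite Markov game and T ∈ ℕ. Suppose given Markov joint policies π^1,…,π^T, functions \bar V^t_{i,h}: S → ℝ (with \bar V^t_{i,H+1} ≡ 0) and bonus functions g^t_{i,h}: S → [0,∞) for t ∈ {0,…,T−1}, i ∈ [m], h ∈ [H], satisfying for every t ∈ [T], i ∈ [m], h ∈ [H], s ∈ S: (1A) max_{μ_i ∈ Δ(A_i)} (D_{μ_i×π^t_{-i,h}} − D_{π^t_h})[ r_{i,h} + P_h \bar V^t_{i,h+1} ](s) ≤ g^{t−1}_{i,h}(s); (1B) min{ D_{π^t_h}[ r_{i,h} + P_h \bar V^t_{i,h+1} ](s) + g^{t−1}_{i,h}(s), H−h+1 } ≤ \bar V^t_{i,h}(s) ≤ D_{π^t_h}[ r_{i,h} + P_h \bar V^t_{i,h+1} ](s) + 2 g^{t−1}_{i,h}(s); and (1C) for some B ≥ 0 and all i ∈ [m], h ∈ [H]: Σ_{t=1}^{T} E_{s_h ∼ π^t}[ g^{t−1}_{i,h}(s_h)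 ] ≤ B, where E_{s_h∼π^t} is over the state at step h when running π^t from s_1. Then CCEReg(T) := max_{i∈[m]} Σ_{t=1}^T [ V^{†,π^t_{-i}}_{i,1}(s_1) − V^{π^t}_{i,1}(s_1) ]_+ ≤ 2HB. In particular, if B = √(L T log²(T/δ)) then CCEReg(T) ≤ 2H √(LT) log(T/δ). -/
/-!
Fix a player `i` and a round `t`. By (1A) and the lower half of (1B), `min (V̄_h, H - h)` is a
supersolution of the Bellman equation of every deviation `μ × π^t_{-i}`, so `V̄` dominates the
value of every deviation. By the upper half of (1B), `V̄` exceeds the Bellman backup of `π^t` by at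
most `2 g`, so telescoping along the trajectory of `π^t` bounds `V̄_1(s_1) - V^{π^t}_1(s_1)` by
`2 ∑_h E_{π^t}[g_h]`. Summing over rounds and applying (1C) at each of the `H` steps gives `2 H B`.
-/

open Finset

/-- A probability vector on a finite type. -/
def IsDist {α : Type*} [Fintype α] (p : α → ℝ) : Prop :=
  (∀ a, 0 ≤ p a) ∧ ∑ a, p a = 1

/-- Combine player `i`'s action with a profile of actions of the other players into a
joint action. -/
def combine {m : ℕ} {A : Fin m → Type*} (i : Fin m) (ai : A i)
    (an : ∀ j : {j : Fin m // j ≠ i}, A j.1) (j : Fin m) : A j :=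
  if h : j = i then cast (congrArg A h).symm ai else an ⟨j, h⟩

/-- Restrict a joint action to the players other than `i`. -/
def restrict {m : ℕ} {A : Fin m → Type*} (i : Fin m) (a : ∀ j, A j)
    (j : {j : Fin m // j ≠ i}) : A j.1 :=
  a j.1

/-- Marginal, on the actions of all players other than `i`, of a distribution `p` over
joint actions. -/
noncomputable def marg {m : ℕ} {A : Fin m → Type*} [∀ j, Fintype (A j)] (i : Fin m)
    (p : (∀ j, A j) → ℝ) (an : ∀ j : {j : Fin m // j ≠ i}, A j.1) : ℝ :=
  ∑ ai : A i, p (combine i ai an)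

/-- The value function `V^π_h(s)` of a Markov joint policy `π` (zero-based steps,
`jointV H P rew π H s = 0`). -/
noncomputable def jointV {S : Type*} [Fintype S] {m : ℕ} {A : Fin m → Type*}
    [∀ j, Fintype (A j)] (H : ℕ) (P : ℕ → S → (∀ j, A j) → S → ℝ)
    (rew : ℕ → S → (∀ j, A j) → ℝ) (π : ℕ → S → (∀ j, A j) → ℝ) : ℕ → S → ℝ
  | h, s =>
    if _hh : h < H then
      ∑ a, π h s a * (rew h s a + ∑ s', P h s a s' * jointV H P rew π (h + 1) s')
    else 0
  termination_by h _ => H - h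
  decreasing_by omega

/-- The distribution of the state `s_h` at step `h` when running the Markov joint
policy `π` from the initial state `s1` (zero-based steps). -/
noncomputable def stateDist {S : Type*} [Fintype S] [DecidableEq S] {m : ℕ}
    {A : Fin m → Type*} [∀ j, Fintype (A j)]
    (P : ℕ → S → (∀ j, A j) → S → ℝ) (π : ℕ → S → (∀ j, A j) → ℝ) (s1 : S) :
    ℕ → S → ℝ
  | 0, s => if s = s1 then 1 else 0
  | (h + 1), s' => ∑ s, ∑ a, stateDist P π s1 h s * π h s a * P h s a s'

section

variable {S : Type*} [Fintype S] {m : ℕ} {A : Fin m → Type*}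

lemma piSplitAt_symm_eq_combine (i : Fin m) (ai : A i) (an : ∀ j : {j : Fin m // j ≠ i}, A j.1) :
    (Equiv.piSplitAt i A).symm (ai, an) = combine i ai an := by
  funext j
  by_cases h : j = i
  · subst h
    simp [Equiv.piSplitAt, combine]
  · simp [Equiv.piSplitAt, combine, h]

variable [∀ j, Fintype (A j)]

section Deviation

lemma sum_marg (i : Fin m) (p : (∀ j, A j) → ℝ) : ∑ an, marg i p an = ∑ a, p a := by
  rw [← (Equiv.piSplitAt i A).symm.sum_comp, Fintype.sum_prod_type, Finset.sum_comm]
  simp only [marg, piSplitAt_symm_eq_combine]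

/-- The product distribution `μ × p_{-i}`. -/
noncomputable def deviate (i : Fin m) (μ : A i → ℝ) (p : (∀ j, A j) → ℝ) (a : ∀ j, A j) : ℝ :=
  μ (a i) * marg i p (restrict i a)

lemma isDist_deviate {i : Fin m} {μ : A i → ℝ} {p : (∀ j, A j) → ℝ} (hμ : IsDist μ)
    (hp : IsDist p) : IsDist (deviate i μ p) := by
  refine ⟨fun a => mul_nonneg (hμ.1 _) (sum_nonneg fun _ _ => hp.1 _), ?_⟩
  calc ∑ a, deviate i μ p a = ∑ x : A i × _, μ x.1 * marg i p x.2 :=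
        (Equiv.piSplitAt i A).sum_comp fun x => μ x.1 * marg i p x.2
    _ = 1 := by rw [Fintype.sum_prod_type, ← Fintype.sum_mul_sum, sum_marg, hμ.2, hp.2, one_mul]

end Deviation

section Bellman

variable {H : ℕ} {P : ℕ → S → (∀ j, A j) → S → ℝ} {rew : ℕ → S → (∀ j, A j) → ℝ}
  {π : ℕ → S → (∀ j, A j) → ℝ}

/-- `D_p[r_h + P_h V](s)`. -/
noncomputable def bellman (P : ℕ → S → (∀ j, A j) → S → ℝ) (rew : ℕ → S → (∀ j, A j) → ℝ)
    (h : ℕ) (s : S) (p : (∀ j, A j) → ℝ) (V : S → ℝ) : ℝ :=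
  ∑ a, p a * (rew h s a + ∑ s', P h s a s' * V s')

lemma jointV_of_lt {h : ℕ} (hh : h < H) (s : S) :
    jointV H P rew π h s = bellman P rew h s (π h s) (jointV H P rew π (h + 1)) := by
  rw [jointV, dif_pos hh, bellman]

lemma jointV_self (s : S) : jointV H P rew π H s = 0 := by
  rw [jointV, dif_neg (lt_irrefl H)]

lemma bellman_mono {h : ℕ} {s : S} {p : (∀ j, A j) → ℝ} {U V : S → ℝ} (hp : ∀ a, 0 ≤ p a)
    (hP : ∀ a s', 0 ≤ P h s a s') (hUV : ∀ s', U s' ≤ V s') :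
    bellman P rew h s p U ≤ bellman P rew h s p V :=
  sum_le_sum fun a _ => mul_le_mul_of_nonneg_left
    (add_le_add_right (sum_le_sum fun s' _ => mul_le_mul_of_nonneg_left (hUV s') (hP a s')) _)
    (hp a)

lemma bellman_le_add {h : ℕ} {s : S} {p : (∀ j, A j) → ℝ} {V : S → ℝ} {R c : ℝ}
    (hp : IsDist p) (hP : ∀ a, IsDist (P h s a)) (hr : ∀ a, rew h s a ≤ R)
    (hV : ∀ s', V s' ≤ c) : bellman P rew h s p V ≤ R + c := by
  have hstep : ∀ a, rew h s a + ∑ s', P h s a s' * V s' ≤ R + c := fun a =>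
    add_le_add (hr a) <| calc
      ∑ s', P h s a s' * V s' ≤ ∑ s', P h s a s' * c :=
        sum_le_sum fun s' _ => mul_le_mul_of_nonneg_left (hV s') ((hP a).1 s')
      _ = c := by rw [← sum_mul, (hP a).2, one_mul]
  calc bellman P rew h s p V ≤ ∑ a, p a * (R + c) :=
        sum_le_sum fun a _ => mul_le_mul_of_nonneg_left (hstep a) (hp.1 a)
    _ = R + c := by rw [← sum_mul, hp.2, one_mul]

lemma bellman_sub_bellman (h : ℕ) (s : S) (p : (∀ j, A j) → ℝ) (U V : S → ℝ) :
    bellman P rew h s p U - bellman P rew h s p V =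
      ∑ a, p a * ∑ s', P h s a s' * (U s' - V s') := by
  rw [bellman, bellman, ← sum_sub_distrib]
  refine sum_congr rfl fun a _ => ?_
  rw [← mul_sub, add_sub_add_left_eq_sub, ← sum_sub_distrib]
  simp only [mul_sub]

theorem jointV_le_of_bellman_le (hπ : ∀ h < H, ∀ s a, 0 ≤ π h s a)
    (hP : ∀ h < H, ∀ s a s', 0 ≤ P h s a s') {U : ℕ → S → ℝ} (hUH : ∀ s, 0 ≤ U H s)
    (hU : ∀ h < H, ∀ s, bellman P rew h s (π h s) (U (h + 1)) ≤ U h s) {h : ℕ} (hh : h ≤ H)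
    (s : S) : jointV H P rew π h s ≤ U h s := by
  induction hh using Nat.decreasingInduction generalizing s with
  | self => rw [jointV_self]; exact hUH s
  | of_succ k hk ih =>
    rw [jointV_of_lt hk]
    exact (bellman_mono (hπ k hk s) (hP k hk s) ih).trans (hU k hk s)

end Bellman

section StateDist

variable [DecidableEq S] {H : ℕ} {P : ℕ → S → (∀ j, A j) → S → ℝ}
  {rew : ℕ → S → (∀ j, A j) → ℝ} {π : ℕ → S → (∀ j, A j) → ℝ} {s1 : S}

lemma stateDist_nonneg (hπ : ∀ h < H, ∀ s a, 0 ≤ π h s a)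
    (hP : ∀ h < H, ∀ s a s', 0 ≤ P h s a s') {h : ℕ} (hh : h ≤ H) (s : S) :
    0 ≤ stateDist P π s1 h s := by
  induction h generalizing s with
  | zero => rw [stateDist]; split_ifs <;> norm_num
  | succ h ih =>
    rw [stateDist]
    exact sum_nonneg fun s' _ => sum_nonneg fun a _ =>
      mul_nonneg (mul_nonneg (ih (by omega) s') (hπ h hh s' a)) (hP h hh s' a s)

lemma sum_stateDist_zero_mul (f : S → ℝ) : ∑ s, stateDist P π s1 0 s * f s = f s1 := by
  simp [stateDist]

lemma sum_stateDist_mul_transition (h : ℕ) (f : S → ℝ) :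
    ∑ s, stateDist P π s1 h s * ∑ a, π h s a * ∑ s', P h s a s' * f s' =
      ∑ s', stateDist P π s1 (h + 1) s' * f s' := by
  simp only [stateDist, mul_sum, sum_mul, mul_assoc]
  exact (sum_congr rfl fun s _ => sum_comm).trans sum_comm

theorem sub_jointV_le_sum_stateDist (hπ : ∀ h < H, ∀ s a, 0 ≤ π h s a)
    (hP : ∀ h < H, ∀ s a s', 0 ≤ P h s a s') {U c : ℕ → S → ℝ} (hUH : ∀ s, U H s ≤ 0)
    (hU : ∀ h < H, ∀ s, U h s ≤ bellman P rew h s (π h s) (U (h + 1)) + c h s) :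
    U 0 s1 - jointV H P rew π 0 s1 ≤ ∑ h ∈ range H, ∑ s, stateDist P π s1 h s * c h s := by
  set gap : ℕ → ℝ := fun h => ∑ s, stateDist P π s1 h s * (U h s - jointV H P rew π h s)
  have gap_le_succ : ∀ h < H, gap h ≤ ∑ s, stateDist P π s1 h s * c h s + gap (h + 1) := by
    intro h hh
    have hstep : ∀ s, U h s - jointV H P rew π h s ≤
        ∑ a, π h s a * ∑ s', P h s a s' * (U (h + 1) s' - jointV H P rew π (h + 1) s') +
          c h s := fun s => by
      rw [jointV_of_lt hh, ← bellman_sub_bellman]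
      linarith [hU h hh s]
    calc gap h ≤ ∑ s, stateDist P π s1 h s * (∑ a, π h s a * ∑ s', P h s a s' *
          (U (h + 1) s' - jointV H P rew π (h + 1) s') + c h s) :=
          sum_le_sum fun s _ =>
            mul_le_mul_of_nonneg_left (hstep s) (stateDist_nonneg hπ hP hh.le s)
      _ = _ := by
        simp only [mul_add, sum_add_distrib]
        rw [sum_stateDist_mul_transition, add_comm]
  have gap_H : gap H ≤ 0 := sum_nonpos fun s _ => mul_nonpos_of_nonneg_of_nonpos
    (stateDist_nonneg hπ hP le_rfl s) (by rw [jointV_self, sub_zero]; exact hUH s)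
  have telescope : ∀ k ≤ H, gap 0 ≤ ∑ h ∈ range k, ∑ s, stateDist P π s1 h s * c h s + gap k := by
    intro k hk
    induction k with
    | zero => simp
    | succ k ih =>
      rw [sum_range_succ]
      linarith [ih (by omega), gap_le_succ k hk]
  have := telescope H le_rfl
  rw [show gap 0 = U 0 s1 - jointV H P rew π 0 s1 from sum_stateDist_zero_mul _] at this
  linarith

end StateDist

theorem jointV_deviate_le {H : ℕ} {P : ℕ → S → (∀ j, A j) → S → ℝ}
    {rew : ℕ → S → (∀ j, A j) → ℝ} {π : ℕ → S → (∀ j, A j) → ℝ} {i : Fin m}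
    {μ : ℕ → S → A i → ℝ} {Vbar g : ℕ → S → ℝ}
    (hP : ∀ h < H, ∀ s a, IsDist (P h s a)) (hrew : ∀ h < H, ∀ s a, rew h s a ≤ 1)
    (hπ : ∀ h < H, ∀ s, IsDist (π h s)) (hμ : ∀ h < H, ∀ s, IsDist (μ h s))
    (hVbarH : ∀ s, Vbar H s = 0)
    (h1A : ∀ h < H, ∀ s, bellman P rew h s (deviate i (μ h s) (π h s)) (Vbar (h + 1)) -
      bellman P rew h s (π h s) (Vbar (h + 1)) ≤ g h s)
    (h1B : ∀ h < H, ∀ s,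
      min (bellman P rew h s (π h s) (Vbar (h + 1)) + g h s) ((H : ℝ) - h) ≤ Vbar h s)
    {h : ℕ} (hh : h ≤ H) (s : S) :
    jointV H P rew (fun h s => deviate i (μ h s) (π h s)) h s ≤ Vbar h s := by
  have hdev : ∀ h < H, ∀ s, IsDist (deviate i (μ h s) (π h s)) := fun h hh s =>
    isDist_deviate (hμ h hh s) (hπ h hh s)
  refine (jointV_le_of_bellman_le (U := fun h s => min (Vbar h s) ((H : ℝ) - h))
    (fun h hh s => (hdev h hh s).1) (fun h hh s a => (hP h hh s a).1) (fun s => ?_)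
    (fun h hh s => ?_) hh s).trans (min_le_left _ _)
  · simp [hVbarH]
  · have hle_Vbar := bellman_mono (rew := rew) (hdev h hh s).1 (fun a => (hP h hh s a).1)
      (fun s' => min_le_left (Vbar (h + 1) s') ((H : ℝ) - ↑(h + 1)))
    have hle_horizon := bellman_le_add (hdev h hh s) (hP h hh s) (hrew h hh s)
      (fun s' => min_le_right (Vbar (h + 1) s') ((H : ℝ) - ↑(h + 1)))
    have hH : 1 + ((H : ℝ) - ↑(h + 1)) = H - h := by push_cast; ring
    rw [hH] at hle_horizon
    refine le_min (le_trans ?_ (h1B h hh s)) hle_horizon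
    exact le_min (by linarith [h1A h hh s]) hle_horizon

end

/-- Rounds are zero-based: round `t` here is round `t+1` of the paper, with `Vbar t` and `g t`
playing the roles of `V̄^{t+1}` and `g^t`. The best response is expressed by quantifying over all
Markov deviation policies `πdag` of player `i`. -/
theorem statement_2 {S : Type*} [Fintype S] [DecidableEq S] {m H T : ℕ}
    {A : Fin m → Type*} [∀ j, Fintype (A j)]
    (P : ℕ → S → (∀ j, A j) → S → ℝ)
    (hP : ∀ h < H, ∀ s a, IsDist (P h s a))
    (rew : Fin m → ℕ → S → (∀ j, A j) → ℝ)
    (hrew : ∀ i, ∀ h < H, ∀ s a, rew i h s a ∈ Set.Icc (0 : ℝ) 1)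
    (s1 : S)
    (πt : ℕ → ℕ → S → (∀ j, A j) → ℝ)
    (hπt : ∀ t < T, ∀ h < H, ∀ s, IsDist (πt t h s))
    (Vbar : ℕ → Fin m → ℕ → S → ℝ)
    (hVbarH : ∀ t < T, ∀ i s, Vbar t i H s = 0)
    (g : ℕ → Fin m → ℕ → S → ℝ)
    (hg : ∀ t < T, ∀ i, ∀ h < H, ∀ s, 0 ≤ g t i h s)
    (B : ℝ)
    -- (1A) per-state no-regret
    (h1A : ∀ t < T, ∀ i : Fin m, ∀ h < H, ∀ s, ∀ μ : A i → ℝ, IsDist μ →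
      (∑ a, μ (a i) * marg i (πt t h s) (restrict i a) *
          (rew i h s a + ∑ s', P h s a s' * Vbar t i (h + 1) s')) -
        (∑ a, πt t h s a * (rew i h s a + ∑ s', P h s a s' * Vbar t i (h + 1) s'))
        ≤ g t i h s)
    -- (1B) optimistic V-estimates
    (h1B : ∀ t < T, ∀ i : Fin m, ∀ h < H, ∀ s,
      min ((∑ a, πt t h s a * (rew i h s a + ∑ s', P h s a s' * Vbar t i (h + 1) s'))
            + g t i h s) ((H : ℝ) - (h : ℝ))
        ≤ Vbar t i h s ∧
      Vbar t i h s
        ≤ (∑ a, πt t h s a * (rew i h s a + ∑ s', P h s a s' * Vbar t i (h + 1) s'))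
            + 2 * g t i h s)
    -- (1C) pigeonhole condition
    (h1C : ∀ i : Fin m, ∀ h < H,
      ∑ t ∈ Finset.range T, ∑ s, stateDist P (πt t) s1 h s * g t i h s ≤ B) :
    ∀ i : Fin m, ∀ πdag : ℕ → ℕ → S → A i → ℝ,
      (∀ t < T, ∀ h < H, ∀ s, IsDist (πdag t h s)) →
      ∑ t ∈ Finset.range T,
          max (jointV H P (rew i)
                (fun h s a => πdag t h s (a i) * marg i (πt t h s) (restrict i a)) 0 s1
              - jointV H P (rew i) (πt t) 0 s1) 0
        ≤ 2 * H * B := by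
  intro i πdag hπdag
  have hround : ∀ t ∈ range T,
      max (jointV H P (rew i) (fun h s => deviate i (πdag t h s) (πt t h s)) 0 s1 -
          jointV H P (rew i) (πt t) 0 s1) 0 ≤
        2 * ∑ h ∈ range H, ∑ s, stateDist P (πt t) s1 h s * g t i h s := by
    intro t ht
    rw [mem_range] at ht
    have hπ : ∀ h < H, ∀ s a, 0 ≤ πt t h s a := fun h hh s => (hπt t ht h hh s).1
    have hP' : ∀ h < H, ∀ s a s', 0 ≤ P h s a s' := fun h hh s a => (hP h hh s a).1
    have hdev := jointV_deviate_le hP (fun h hh s a => (hrew i h hh s a).2) (hπt t ht)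
      (hπdag t ht) (hVbarH t ht i) (fun h hh s => h1A t ht i h hh s _ (hπdag t ht h hh s))
      (fun h hh s => (h1B t ht i h hh s).1) (Nat.zero_le H) s1
    have hgap := sub_jointV_le_sum_stateDist (rew := rew i) (s1 := s1)
      (c := fun h s => 2 * g t i h s) hπ hP' (fun s => (hVbarH t ht i s).le)
      (fun h hh s => (h1B t ht i h hh s).2)
    simp only [mul_left_comm _ (2 : ℝ), ← mul_sum] at hgap
    refine max_le (by linarith) (mul_nonneg zero_le_two (sum_nonneg fun h hh => ?_))
    rw [mem_range] at hh
    exact sum_nonneg fun s _ => mul_nonneg (stateDist_nonneg hπ hP' hh.le s) (hg t ht i h hh s)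
  calc _ ≤ ∑ t ∈ range T, 2 * ∑ h ∈ range H, ∑ s, stateDist P (πt t) s1 h s * g t i h s :=
        sum_le_sum hround
    _ = 2 * ∑ h ∈ range H, ∑ t ∈ range T, ∑ s, stateDist P (πt t) s1 h s * g t i h s := by
        rw [← mul_sum, sum_comm]
    _ ≤ 2 * ∑ h ∈ range H, B :=
        mul_le_mul_of_nonneg_left (sum_le_sum fun h hh => h1C i h (mem_range.mp hh)) zero_le_two
    _ = 2 * H * B := by rw [sum_const, card_range, nsmul_eq_mul, mul_assoc]
end

section
/- (All-policy linear completeness implies few action-relevant states.) Let MG be an m-player finite Markov game and, for each player i ∈ [m], let φ_i : S × A_i → ℝ^d be a feature map. Assume all-policy completeness: for every i ∈ [m], h ∈ [H], every function V : S → [0, H], and every Markov joint policy π, there exists θ ∈ ℝ^d such that for all (s, a_i) ∈ S × A_i: φ_i(s, a_i)^⊤ θ = E_{a_{-i} ∼ π_{-i,h}(·|s)}[ r_{i,h}(s, (a_i, a_{-i})) + E_{s' ∼ P_h(·|s,(a_i,a_{-i}))}[ V(s') ] ]. Then for every i ∈ [m] and h ∈ [H], the number of states s ∈ S for which there exists a_i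 ∈ A_i such that the map a_{-i} ↦ P_h(·|s, (a_i, a_{-i})) is non-constant is at most d. Consequently, if m ≥ 2, then for each h ∈ [H] there are at most d·m states s at which the transition P_h(·|s, ·) depends on the joint action. -/
open Finset

lemma ncard_le_finrank_of_single_mem {K ι : Type*} [Field K] [Fintype ι] [DecidableEq ι]
    (W : Submodule K (ι → K)) (B : Set ι) (hB : ∀ i ∈ B, Pi.single i 1 ∈ W) :
    B.ncard ≤ Module.finrank K W := by
  classical
  have hli : LinearIndependent K (fun i : B => (Pi.single (i : ι) (1 : K) : ι → K)) :=
    (Pi.linearIndependent_single_one ι K).comp _ Subtype.val_injective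
  have hspan : Submodule.span K (Set.range fun i : B => Pi.single (i : ι) (1 : K)) ≤ W :=
    Submodule.span_le.mpr (by rintro _ ⟨i, rfl⟩; exact hB i i.2)
  rw [← Nat.card_coe_set_eq, Nat.card_eq_fintype_card, ← finrank_span_eq_card hli]
  exact Submodule.finrank_mono hspan

section Combine

variable {m : ℕ} {A : Fin m → Type*}

@[simp]
lemma combine_apply_self (i : Fin m) (ai : A i) (an : ∀ j : {j : Fin m // j ≠ i}, A j.1) :
    combine i ai an i = ai := by
  simp [combine]

lemma combine_apply_of_ne (i : Fin m) (ai : A i) (an : ∀ j : {j : Fin m // j ≠ i}, A j.1)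
    {j : Fin m} (h : j ≠ i) : combine i ai an j = an ⟨j, h⟩ := by
  simp [combine, h]

lemma combine_inj {i : Fin m} {ai ai' : A i} {an an' : ∀ j : {j : Fin m // j ≠ i}, A j.1} :
    combine i ai an = combine i ai' an' ↔ ai = ai' ∧ an = an' := by
  refine ⟨fun h => ⟨?_, ?_⟩, fun ⟨hai, han⟩ => hai ▸ han ▸ rfl⟩
  · simpa using congrFun h i
  · funext j
    simpa [combine_apply_of_ne i _ _ j.2] using congrFun h j.1

lemma combine_apply_restrict (i : Fin m) (a : ∀ j, A j) :
    combine i (a i) (fun j => a j.1) = a := by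
  funext j
  by_cases h : j = i
  · subst h; exact combine_apply_self _ _ _
  · exact combine_apply_of_ne _ _ _ h

/-- `a` and `a'` are linked through `combine i (a i) a'₋ᵢ`, which differs from `a'` only at
`i ≠ j`. -/
lemma eq_of_combine_invariant {β : Type*} (f : (∀ j, A j) → β) {i j : Fin m} (hij : i ≠ j)
    (hi : ∀ ai an an', f (combine i ai an) = f (combine i ai an'))
    (hj : ∀ aj an an', f (combine j aj an) = f (combine j aj an')) (a a' : ∀ k, A k) :
    f a = f a' := by
  set b := combine i (a i) (fun k => a' k.1)
  have hbj : b j = a' j := combine_apply_of_ne i _ _ hij.symm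
  calc f a = f b := by rw [← hi (a i) (fun k => a k.1), combine_apply_restrict]
    _ = f (combine j (b j) (fun k => b k.1)) := by rw [combine_apply_restrict]
    _ = f a' := by rw [hj (b j) _ (fun k => a' k.1), hbj, combine_apply_restrict]

variable [∀ j, Fintype (A j)]

lemma isDist_ite_eq [DecidableEq (∀ j, A j)] (a₀ : ∀ j, A j) :
    IsDist (fun a => if a = a₀ then (1 : ℝ) else 0) :=
  ⟨fun _ => by positivity, by simp⟩

lemma marg_ite_eq_combine [DecidableEq (∀ j, A j)] (i : Fin m)
    [DecidableEq (∀ j : {j : Fin m // j ≠ i}, A j.1)] (a₀ : A i)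
    (b an : ∀ j : {j : Fin m // j ≠ i}, A j.1) :
    marg i (fun a => if a = combine i a₀ b then (1 : ℝ) else 0) an =
      if an = b then 1 else 0 := by
  classical
  by_cases han : an = b <;> simp [marg, combine_inj, han]

end Combine

lemma exists_theta_of_pure_policy {S : Type*} [Fintype S] {m H d : ℕ} {A : Fin m → Type*}
    [∀ j, Fintype (A j)] (P : ℕ → S → (∀ j, A j) → S → ℝ)
    (rew : Fin m → ℕ → S → (∀ j, A j) → ℝ) (φ : ∀ i : Fin m, S → A i → Fin d → ℝ)
    (i : Fin m) (h : ℕ)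
    (hcomplete : ∀ V : S → ℝ, (∀ s, V s ∈ Set.Icc (0 : ℝ) H) →
      ∀ π : ℕ → S → (∀ j, A j) → ℝ, (∀ h' < H, ∀ s, IsDist (π h' s)) →
      ∃ θ : Fin d → ℝ, ∀ s (ai : A i),
        (∑ k, φ i s ai k * θ k) =
          ∑ an, marg i (π h s) an *
            (rew i h s (combine i ai an) +
              ∑ s', P h s (combine i ai an) s' * V s'))
    [Nonempty (A i)] (σ : S → ∀ j : {j : Fin m // j ≠ i}, A j.1) (V : S → ℝ)
    (hV : ∀ s, V s ∈ Set.Icc (0 : ℝ) H) :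
    ∃ θ : Fin d → ℝ, ∀ s (ai : A i),
      (∑ k, φ i s ai k * θ k) =
        rew i h s (combine i ai (σ s)) + ∑ s', P h s (combine i ai (σ s)) s' * V s' := by
  classical
  obtain ⟨θ, hθ⟩ := hcomplete V hV
    (fun _ s a => if a = combine i (Classical.arbitrary _) (σ s) then 1 else 0)
    (fun _ _ _ => isDist_ite_eq _)
  refine ⟨θ, fun s ai => ?_⟩
  rw [hθ s ai]
  simp only [marg_ite_eq_combine, ite_mul, one_mul, zero_mul, Finset.sum_ite_eq',
    Finset.mem_univ, if_true]

section Backup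

variable {S α β : Type*} [Fintype S] {d : ℕ}

def backup (r : S → α → β → ℝ) (P : S → α → β → S → ℝ) (σ : S → β) (V : S → ℝ) :
    S → α → ℝ :=
  fun s a => r s a (σ s) + ∑ s', P s a (σ s) s' * V s'

variable (φ : S → α → Fin d → ℝ) {r : S → α → β → ℝ} {P : S → α → β → S → ℝ}

lemma backup_sub_backup_zero (σ : S → β) (V : S → ℝ) (s : S) (a : α) :
    backup r P σ V s a - backup r P σ 0 s a = ∑ s', P s a (σ s) s' * V s' := by
  simp [backup]

lemma backup_mem_range
    (hreal : ∀ (σ : S → β) (V : S → ℝ), (∀ s, V s ∈ Set.Icc (0 : ℝ) 1) →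
      ∃ θ : Fin d → ℝ, ∀ s a, ∑ k, φ s a k * θ k = backup r P σ V s a)
    (a : S → α) (σ : S → β) {V : S → ℝ} (hV : ∀ s, V s ∈ Set.Icc (0 : ℝ) 1) :
    (fun s => backup r P σ V s (a s)) ∈ LinearMap.range (Matrix.mulVecLin fun s => φ s (a s)) := by
  obtain ⟨θ, hθ⟩ := hreal σ V hV
  exact ⟨θ, funext fun s => hθ s (a s)⟩

/-- Switching the others' action at `s₀` alone from `b` to `b'`, and the value function from
`0` to the indicator of `t`, isolates the coordinate `s₀`. -/
lemma single_mem_range_of_transition_ne [DecidableEq S]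
    (hreal : ∀ (σ : S → β) (V : S → ℝ), (∀ s, V s ∈ Set.Icc (0 : ℝ) 1) →
      ∃ θ : Fin d → ℝ, ∀ s a, ∑ k, φ s a k * θ k = backup r P σ V s a)
    (a : S → α) {s₀ t : S} {b b' : β} (hne : P s₀ (a s₀) b t ≠ P s₀ (a s₀) b' t) :
    Pi.single s₀ 1 ∈ LinearMap.range (Matrix.mulVecLin fun s => φ s (a s)) := by
  set W := LinearMap.range (Matrix.mulVecLin fun s => φ s (a s))
  set σ : S → β := fun _ => b
  set σ' := Function.update σ s₀ b'
  have hV : ∀ s, (Pi.single t 1 : S → ℝ) s ∈ Set.Icc (0 : ℝ) 1 := fun s => by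
    by_cases hs : s = t <;> simp [hs]
  have h0 : ∀ s, (0 : S → ℝ) s ∈ Set.Icc (0 : ℝ) 1 := fun _ => by simp
  let g : (S → β) → (S → ℝ) → S → ℝ := fun σ V s => backup r P σ V s (a s)
  have hdiff : (g σ (Pi.single t 1) - g σ 0) - (g σ' (Pi.single t 1) - g σ' 0) =
      (P s₀ (a s₀) b t - P s₀ (a s₀) b' t) • Pi.single s₀ 1 := by
    funext s
    simp only [g, Pi.sub_apply, backup_sub_backup_zero]
    by_cases hs : s = s₀
    · subst hs; simp [σ', σ, Pi.single_apply]
    · simp [σ', σ, hs]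
  have hmem : (P s₀ (a s₀) b t - P s₀ (a s₀) b' t) • Pi.single s₀ (1 : ℝ) ∈ W :=
    hdiff ▸ W.sub_mem
      (W.sub_mem (backup_mem_range φ hreal a σ hV) (backup_mem_range φ hreal a σ h0))
      (W.sub_mem (backup_mem_range φ hreal a σ' hV) (backup_mem_range φ hreal a σ' h0))
  exact (W.smul_mem_iff (sub_ne_zero.mpr hne)).mp hmem

lemma ncard_le_of_backup_realizable [Nonempty α]
    (hreal : ∀ (σ : S → β) (V : S → ℝ), (∀ s, V s ∈ Set.Icc (0 : ℝ) 1) →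
      ∃ θ : Fin d → ℝ, ∀ s a, ∑ k, φ s a k * θ k = backup r P σ V s a) :
    {s | ∃ a b b', P s a b ≠ P s a b'}.ncard ≤ d := by
  classical
  set B := {s | ∃ a b b', P s a b ≠ P s a b'}
  have hwit : ∀ s, ∃ a : α, s ∈ B → ∃ b b', P s a b ≠ P s a b' := fun s => by
    by_cases hs : s ∈ B
    · obtain ⟨a, hab⟩ := hs
      exact ⟨a, fun _ => hab⟩
    · exact ⟨Classical.arbitrary α, fun h => absurd h hs⟩
  choose a ha using hwit
  have hsingle :
      ∀ s ∈ B, Pi.single s 1 ∈ LinearMap.range (Matrix.mulVecLin fun s => φ s (a s)) :=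
    fun s hs => by
      obtain ⟨b, b', hne⟩ := ha s hs
      obtain ⟨t, ht⟩ := Function.ne_iff.mp hne
      exact single_mem_range_of_transition_ne φ hreal a ht
  calc B.ncard ≤ Matrix.rank (fun s => φ s (a s) : Matrix S (Fin d) ℝ) :=
        ncard_le_finrank_of_single_mem _ B hsingle
    _ ≤ d := (Matrix.rank_le_card_width _).trans_eq (Fintype.card_fin d)

end Backup

theorem statement_9_general {S : Type*} [Fintype S] {m H d : ℕ} {A : Fin m → Type*}
    [∀ j, Fintype (A j)]
    (P : ℕ → S → (∀ j, A j) → S → ℝ)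
    (rew : Fin m → ℕ → S → (∀ j, A j) → ℝ)
    (φ : ∀ i : Fin m, S → A i → Fin d → ℝ)
    (hcomplete : ∀ i : Fin m, ∀ h < H, ∀ V : S → ℝ, (∀ s, V s ∈ Set.Icc (0 : ℝ) H) →
      ∀ π : ℕ → S → (∀ j, A j) → ℝ, (∀ h' < H, ∀ s, IsDist (π h' s)) →
      ∃ θ : Fin d → ℝ, ∀ s (ai : A i),
        (∑ k, φ i s ai k * θ k) =
          ∑ an, marg i (π h s) an *
            (rew i h s (combine i ai an) +
              ∑ s', P h s (combine i ai an) s' * V s')) :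
    (∀ i : Fin m, ∀ h < H,
      Set.ncard {s : S | ∃ ai : A i, ∃ an an',
        P h s (combine i ai an) ≠ P h s (combine i ai an')} ≤ d) ∧
    (2 ≤ m → ∀ h < H,
      Set.ncard {s : S | ∃ a a', P h s a ≠ P h s a'} ≤ d * m) := by
  have hown : ∀ i : Fin m, ∀ h < H,
      Set.ncard {s : S | ∃ ai : A i, ∃ an an',
        P h s (combine i ai an) ≠ P h s (combine i ai an')} ≤ d := by
    intro i h hh
    rcases isEmpty_or_nonempty (A i) with hA | hA
    · simp
    have hH : (1 : ℝ) ≤ H := by exact_mod_cast Nat.one_le_of_lt hh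
    exact ncard_le_of_backup_realizable (φ i) (r := fun s ai an => rew i h s (combine i ai an))
      fun σ V hV => exists_theta_of_pure_policy P rew φ i h (hcomplete i h hh) σ V
        fun s => Set.Icc_subset_Icc le_rfl hH (hV s)
  refine ⟨hown, fun hm h hh => ?_⟩
  set B : Fin m → Set S := fun i => {s : S | ∃ ai : A i, ∃ an an',
    P h s (combine i ai an) ≠ P h s (combine i ai an')}
  obtain ⟨i, j, hij⟩ : ∃ i j : Fin m, i ≠ j := ⟨⟨0, by omega⟩, ⟨1, by omega⟩, by simp⟩
  have hsub : {s : S | ∃ a a', P h s a ≠ P h s a'} ⊆ B i ∪ B j := by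
    rintro s ⟨a, a', hne⟩
    by_contra hs
    simp only [B, Set.mem_union, Set.mem_ofPred_eq, not_or, not_exists, not_not] at hs
    exact hne (eq_of_combine_invariant (P h s) hij hs.1 hs.2 a a')
  calc Set.ncard {s : S | ∃ a a', P h s a ≠ P h s a'}
      ≤ (B i ∪ B j).ncard := Set.ncard_le_ncard hsub
    _ ≤ d + d := (Set.ncard_union_le _ _).trans (add_le_add (hown i h hh) (hown j h hh))
    _ ≤ d * m := by nlinarith

/-- all-policy linear completeness implies few action-relevant
states.  In a finite Markov game with feature maps `φ i : S × A_i → ℝ^d`, if for every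
player `i`, step `h < H`, function `V : S → [0, H]` and Markov joint policy `π` the
Bellman backup `(s, aᵢ) ↦ E_{a₋ᵢ ∼ π₋ᵢ,h(·|s)}[r_{i,h}(s,(aᵢ,a₋ᵢ)) + E_{s'}[V s']]`
is linear in the features, then for every `i` and `h < H` there are at most `d` states
at which, for some own action `aᵢ`, the transition kernel depends on the other players'
actions; consequently, if `m ≥ 2`, at most `d * m` states have transitions depending on
the joint action at step `h`. -/
theorem statement_9 {S : Type*} [Fintype S] {m H d : ℕ} {A : Fin m → Type*}
    [∀ j, Fintype (A j)]
    (P : ℕ → S → (∀ j, A j) → S → ℝ)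
    (hP : ∀ h < H, ∀ s a, IsDist (P h s a))
    (rew : Fin m → ℕ → S → (∀ j, A j) → ℝ)
    (hrew : ∀ i, ∀ h < H, ∀ s a, rew i h s a ∈ Set.Icc (0 : ℝ) 1)
    (φ : ∀ i : Fin m, S → A i → Fin d → ℝ)
    (hcomplete : ∀ i : Fin m, ∀ h < H, ∀ V : S → ℝ, (∀ s, V s ∈ Set.Icc (0 : ℝ) H) →
      ∀ π : ℕ → S → (∀ j, A j) → ℝ, (∀ h' < H, ∀ s, IsDist (π h' s)) →
      ∃ θ : Fin d → ℝ, ∀ s (ai : A i),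
        (∑ k, φ i s ai k * θ k) =
          ∑ an, marg i (π h s) an *
            (rew i h s (combine i ai an) +
              ∑ s', P h s (combine i ai an) s' * V s')) :
    (∀ i : Fin m, ∀ h < H,
      Set.ncard {s : S | ∃ ai : A i, ∃ an an',
        P h s (combine i ai an) ≠ P h s (combine i ai an')} ≤ d) ∧
    (2 ≤ m → ∀ h < H,
      Set.ncard {s : S | ∃ a a', P h s a ≠ P h s a'} ≤ d * m) :=
  statement_9_general P rew φ hcomplete
end
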